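/- For every h ≥ 1, the set of sizes of h-fold sumsets of 3-element sets of integers is {C(h+2, 2) - C(t, 2) : t ∈ [1, h]}. -/

import Mathlib

open Pointwise Finset

/-- The `h`-fold sumset of a finite set `A`. -/
def hfold {G : Type*} [AddCommMonoid G] [DecidableEq G] : ℕ → Finset G → Finset G
  | 0, _ => {0}
  | n + 1, A => hfold n A + A

/-- The `h`-fold restricted sumset of a finite set `A`: sums of `h` distinct elements. -/
def rfold {G : Type*} [AddCommMonoid G] [DecidableEq G] (h : ℕ) (A : Finset G) : Finset G :=
  (A.powersetCard h).image (fun S => S.sum id)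

/-!
Translating and dilating `A` does not change `|hA|`, so we may take `A = {0, b, c}` with
`0 < b < c` coprime. Then `hA = {j b + k c : j + k ≤ h}`, and every element has exactly one such
representation with `j < c`: reduce `j` modulo `c`, trading `c` copies of `b` for `b` copies of `c`,
and use coprimality for uniqueness. Counting the points `j + k ≤ h` with `j < c` gives
`C(h+2, 2) - C(h+2-c, 2)`, and `t = max 1 (h+2-c)` runs through `[1, h]`
(for the converse take `A = {0, 1, h+2-t}`).
-/
section hfold

variable {G H : Type*} [DecidableEq G] [DecidableEq H]

lemma mem_hfold_zero_pair [AddCommMonoid G] {n : ℕ} {b c x : G} :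
    x ∈ hfold n {0, b, c} ↔ ∃ j k : ℕ, j + k ≤ n ∧ j • b + k • c = x := by
  induction n generalizing x with
  | zero => simp [hfold, eq_comm]
  | succ n ih =>
    rw [hfold, mem_add]
    constructor
    · rintro ⟨y, hy, a, ha, rfl⟩
      obtain ⟨j, k, hjk, rfl⟩ := ih.1 hy
      simp only [mem_insert, mem_singleton] at ha
      rcases ha with rfl | rfl | rfl
      · exact ⟨j, k, by omega, (add_zero _).symm⟩
      · exact ⟨j + 1, k, by omega, by rw [succ_nsmul]; abel⟩
      · exact ⟨j, k + 1, by omega, by rw [succ_nsmul]; abel⟩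
    · rintro ⟨j, k, hjk, rfl⟩
      by_cases hle : j + k ≤ n
      · exact ⟨_, ih.2 ⟨j, k, hle, rfl⟩, 0, by simp, add_zero _⟩
      obtain _ | j := j
      · obtain _ | k := k
        · omega
        exact ⟨_, ih.2 ⟨0, k, by omega, rfl⟩, c, by simp, by rw [succ_nsmul]; abel⟩
      · exact ⟨_, ih.2 ⟨j, k, by omega, rfl⟩, b, by simp, by rw [succ_nsmul]; abel⟩

lemma hfold_add_singleton [AddCommMonoid G] (n : ℕ) (A : Finset G) (t : G) :
    hfold n (A + {t}) = hfold n A + {n • t} := by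
  induction n with
  | zero => simp [hfold]
  | succ n ih =>
    rw [hfold, hfold, ih, succ_nsmul, ← singleton_add_singleton]
    abel

lemma card_hfold_add_singleton [AddCancelCommMonoid G] (n : ℕ) (A : Finset G) (t : G) :
    #(hfold n (A + {t})) = #(hfold n A) := by
  rw [hfold_add_singleton, card_add_singleton]

lemma image_hfold [AddCommMonoid G] [AddCommMonoid H] (f : G →+ H) (n : ℕ) (A : Finset G) :
    (hfold n A).image f = hfold n (A.image f) := by
  induction n with
  | zero => simp [hfold]
  | succ n ih => rw [hfold, hfold, image_add, ih]

lemma card_hfold_image [AddCommMonoid G] [AddCommMonoid H] {f : G →+ H}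
    (hf : Function.Injective f) (n : ℕ) (A : Finset G) :
    #(hfold n (A.image f)) = #(hfold n A) := by
  rw [← image_hfold, card_image_of_injective _ hf]

end hfold

def triangle (n : ℕ) : Finset (ℕ × ℕ) := (range (n + 1)).biUnion antidiagonal

lemma mem_triangle {n : ℕ} {p : ℕ × ℕ} : p ∈ triangle n ↔ p.1 + p.2 ≤ n := by
  simp [triangle]

lemma card_triangle (n : ℕ) : #(triangle n) = (n + 2).choose 2 := by
  have hdisj : (range (n + 1) : Set ℕ).PairwiseDisjoint antidiagonal := fun i _ j _ hij =>
    disjoint_left.2 fun p hi hj => hij ((mem_antidiagonal.1 hi).symm.trans (mem_antidiagonal.1 hj))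
  rw [triangle, card_biUnion hdisj]
  simpa using Nat.sum_range_add_choose n 1

lemma card_triangle_filter_le (n c : ℕ) :
    #((triangle n).filter (c ≤ ·.1)) = (n + 2 - c).choose 2 := by
  rcases lt_or_ge n c with hnc | hcn
  · rw [Nat.choose_eq_zero_of_lt (by omega), card_eq_zero, filter_eq_empty_iff]
    intro p hp
    have := mem_triangle.1 hp
    omega
  · have hshift : (triangle n).filter (c ≤ ·.1) = (triangle (n - c)).map
        ((addRightEmbedding c).prodMap (Function.Embedding.refl ℕ)) := by
      ext ⟨j, k⟩
      simp only [mem_filter, mem_triangle, mem_map, Function.Embedding.coe_prodMap, Prod.exists,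
        Prod.map, addRightEmbedding_apply, Function.Embedding.refl_apply, Prod.mk.injEq]
      constructor
      · rintro ⟨hjk, hcj⟩
        exact ⟨j - c, k, by omega, by omega, rfl⟩
      · rintro ⟨j, k, hjk, rfl, rfl⟩
        omega
    rw [hshift, card_map, card_triangle]
    congr 1
    omega

lemma card_triangle_filter_lt (n c : ℕ) :
    #((triangle n).filter (·.1 < c)) = (n + 2).choose 2 - (n + 2 - c).choose 2 := by
  have hsplit := card_filter_add_card_filter_not (s := triangle n) (·.1 < c)
  simp only [not_lt] at hsplit
  rw [card_triangle_filter_le, card_triangle] at hsplit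
  omega

lemma hfold_zero_pair_eq_image {b c : ℕ} (hbc : b ≤ c) (hc : 0 < c) (n : ℕ) :
    hfold n ({0, b, c} : Finset ℕ) =
      ((triangle n).filter (·.1 < c)).image fun p => p.1 * b + p.2 * c := by
  ext x
  simp only [mem_hfold_zero_pair, smul_eq_mul, mem_image, mem_filter, mem_triangle]
  constructor
  · rintro ⟨j, k, hjk, rfl⟩
    have hj : j % c + c * (j / c) = j := Nat.mod_add_div j c
    have hqb : j / c * b ≤ c * (j / c) := by rw [mul_comm c]; exact Nat.mul_le_mul_left _ hbc
    refine ⟨(j % c, k + j / c * b), ⟨by omega, Nat.mod_lt j hc⟩, ?_⟩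
    conv_rhs => rw [← hj]
    ring
  · rintro ⟨⟨j, k⟩, ⟨hjk, -⟩, rfl⟩
    exact ⟨j, k, hjk, rfl⟩

lemma injOn_mul_add_mul_of_coprime {b c : ℕ} (hcop : b.Coprime c) (n : ℕ) :
    Set.InjOn (fun p : ℕ × ℕ => p.1 * b + p.2 * c) ((triangle n).filter (·.1 < c)) := by
  rintro ⟨j, k⟩ hjk ⟨j', k'⟩ hjk' heq
  simp only [coe_filter, mem_triangle, Set.mem_ofPred_eq] at hjk hjk' heq
  have hmod : j * b ≡ j' * b [MOD c] := by
    simpa [Nat.ModEq, Nat.add_mul_mod_self_right] using congrArg (· % c) heq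
  have hj : j = j' := Nat.ModEq.eq_of_lt_of_lt (hmod.cancel_right_of_coprime hcop.symm) hjk.2 hjk'.2
  subst hj
  have hc : 0 < c := by omega
  simp [Nat.eq_of_mul_eq_mul_right hc (Nat.add_left_cancel heq)]

lemma card_hfold_zero_pair {b c : ℕ} (hbc : b ≤ c) (hcop : b.Coprime c) (n : ℕ) :
    #(hfold n ({0, b, c} : Finset ℕ)) = (n + 2).choose 2 - (n + 2 - c).choose 2 := by
  have hc : 0 < c := Nat.pos_of_ne_zero fun h => by simp_all
  rw [hfold_zero_pair_eq_image hbc hc, card_image_of_injOn (injOn_mul_add_mul_of_coprime hcop n),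
    card_triangle_filter_lt]

lemma exists_lt_lt_of_card_eq_three {α : Type*} [LinearOrder α] {A : Finset α} (hA : #A = 3) :
    ∃ x y z, x < y ∧ y < z ∧ A = {x, y, z} := by
  set e := A.orderEmbOfFin hA
  refine ⟨e 0, e 1, e 2, e.strictMono (by decide), e.strictMono (by decide), ?_⟩
  rw [← image_orderEmbOfFin_univ A hA]
  simp [Fin.univ_succ, e]

lemma exists_card_hfold_eq_zero_pair {A : Finset ℤ} (hA : #A = 3) (n : ℕ) :
    ∃ b c : ℕ, 0 < b ∧ b < c ∧ b.Coprime c ∧ #(hfold n A) = #(hfold n ({0, b, c} : Finset ℕ)) := by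
  obtain ⟨x, y, z, hxy, hyz, rfl⟩ := exists_lt_lt_of_card_eq_three hA
  obtain ⟨u, hu⟩ : ∃ u : ℕ, (u : ℤ) = y - x := ⟨_, Int.toNat_of_nonneg (by omega)⟩
  obtain ⟨v, hv⟩ : ∃ v : ℕ, (v : ℤ) = z - x := ⟨_, Int.toNat_of_nonneg (by omega)⟩
  obtain ⟨b, c, hcop, hub, hvc⟩ := Nat.exists_coprime u v
  set d := u.gcd v
  have hd : 0 < d := Nat.gcd_pos_of_pos_left v (by omega)
  have hbc : b < c := Nat.lt_of_mul_lt_mul_right (by omega : b * d < c * d)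
  refine ⟨b, c, Nat.pos_of_ne_zero fun hb => ?_, hbc, hcop, ?_⟩
  · simp [hb] at hub; omega
  let f : ℕ →+ ℤ := (AddMonoidHom.mulLeft (d : ℤ)).comp (Nat.castAddMonoidHom ℤ)
  have hf : Function.Injective f := fun m m' hm => by simpa [f, hd.ne'] using hm
  have hAf : ({x, y, z} : Finset ℤ) = ({0, b, c} : Finset ℕ).image f + {x} := by
    have hy : y = d * b + x := by rw [hub] at hu; push_cast at hu; linarith
    have hz : z = d * c + x := by rw [hvc] at hv; push_cast at hv; linarith
    rw [hy, hz]
    ext w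
    simp [f, mem_add, eq_comm]
  rw [hAf, card_hfold_add_singleton, card_hfold_image hf]

theorem stmt17 (h : ℕ) (hh : 1 ≤ h) :
    {n : ℕ | ∃ A : Finset ℤ, A.card = 3 ∧ (hfold h A).card = n}
      = {n : ℕ | ∃ t : ℕ, 1 ≤ t ∧ t ≤ h ∧ n = (h + 2).choose 2 - t.choose 2} := by
  ext n
  constructor
  · rintro ⟨A, hA, rfl⟩
    obtain ⟨b, c, hb, hbc, hcop, hcard⟩ := exists_card_hfold_eq_zero_pair hA h
    rw [hcard, card_hfold_zero_pair hbc.le hcop]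
    rcases le_or_gt c (h + 1) with hch | hch
    · exact ⟨h + 2 - c, by omega, by omega, rfl⟩
    · exact ⟨1, le_rfl, hh, by rw [Nat.choose_eq_zero_of_lt (by omega : h + 2 - c < 2)]; rfl⟩
  · rintro ⟨t, ht1, hth, rfl⟩
    refine ⟨({0, 1, h + 2 - t} : Finset ℕ).image (Nat.castAddMonoidHom ℤ), ?_, ?_⟩
    · rw [card_image_of_injective _ (by exact Nat.cast_injective)]
      exact card_eq_three.2 ⟨0, 1, h + 2 - t, by omega, by omega, by omega, rfl⟩
    · rw [card_hfold_image Nat.cast_injective,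
        card_hfold_zero_pair (by omega) (Nat.coprime_one_left _)]
      congr 2
      omega
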